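/- Consider the 8×8 regular orthogonal matrix R_cube = (1/2)·[[−I, I, I, I],[I, −Z, I, Z],[I, Z, −Z, I],[I, I, Z, −Z]] with 2×2 blocks I, Z = J − I. Then for every 0/1 vector v ∈ {0,1}⁸ whose support is a codeword of the extended Hamming [8,4,4] code (i.e., v is 0, all-ones, or the characteristic vector of one of the 14 affine planes of AG(3,2) under the labelling of the paper), R_cubeᵀ v is again a 0/1 vector; and these are the only 0/1 vectors with this property, so there are exactly 16 such vectors. -/
import Mathlib


open Matrix

open scoped Classical

/-- The sporadic `8×8` regular orthogonal matrix `R_cube`. -/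
noncomputable def Rcube : Matrix (Fin 8) (Fin 8) ℝ :=
  (1/2 : ℝ) • !![(-1 : ℝ), 0, 1, 0, 1, 0, 1, 0;
                  0, -1, 0, 1, 0, 1, 0, 1;
                  1, 0, 0, -1, 1, 0, 0, 1;
                  0, 1, -1, 0, 0, 1, 1, 0;
                  1, 0, 0, 1, 0, -1, 1, 0;
                  0, 1, 1, 0, -1, 0, 0, 1;
                  1, 0, 1, 0, 0, 1, 0, -1;
                  0, 1, 0, 1, 1, 0, -1, 0]

/-- The labelling of the 8 coordinates by points of `AG(3,2)` (the cube), as in the paper. -/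
noncomputable def cubePt : Fin 8 → Fin 3 → ZMod 2 :=
  ![![0, 0, 0], ![1, 1, 1], ![1, 0, 1], ![0, 1, 0],
    ![1, 1, 0], ![0, 0, 1], ![0, 1, 1], ![1, 0, 0]]


def N8 : Matrix (Fin 8) (Fin 8) ℤ :=
  !![-1, 0, 1, 0, 1, 0, 1, 0;
      0, -1, 0, 1, 0, 1, 0, 1;
      1, 0, 0, -1, 1, 0, 0, 1;
      0, 1, -1, 0, 0, 1, 1, 0;
      1, 0, 0, 1, 0, -1, 1, 0;
      0, 1, 1, 0, -1, 0, 0, 1;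
      1, 0, 1, 0, 0, 1, 0, -1;
      0, 1, 0, 1, 1, 0, -1, 0]

noncomputable def iota (b : Fin 8 → Bool) : Fin 8 → ℝ := fun j => if b j then 1 else 0

def g (b : Fin 8 → Bool) (j : Fin 8) : ℤ := ∑ i, N8 i j * (if b i then 1 else 0)

def Pb (b : Fin 8 → Bool) : Prop := ∀ j, g b j = 0 ∨ g b j = 2

def Qb (b : Fin 8 → Bool) : Prop :=
  b = (fun _ => false) ∨ b = (fun _ => true) ∨
    ((Finset.univ.filter fun j => b j = true).card = 4 ∧
      ∀ a : Fin 3, ∑ j ∈ Finset.univ.filter (fun j => b j = true), cubePt j a = 0)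

instance : DecidablePred Pb := fun b => inferInstanceAs (Decidable (∀ j, _ ∨ _))
noncomputable instance : DecidablePred Qb := fun b => inferInstanceAs (Decidable (_ ∨ _))

lemma Rcube_entry (i j : Fin 8) : Rcube i j = (N8 i j : ℝ) / 2 := by
  fin_cases i <;> fin_cases j <;> norm_num [Rcube, N8]

set_option maxRecDepth 8000 in
lemma mulVec_iota (b : Fin 8 → Bool) (j : Fin 8) :
    Rcube.transpose.mulVec (iota b) j = (g b j : ℝ) / 2 := by
  have h : ∀ i, iota b i = ((if b i then (1:ℤ) else 0 : ℤ) : ℝ) := by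
    intro i; cases hb : b i <;> simp [iota, hb]
  simp only [mulVec, dotProduct, transpose_apply, Rcube_entry, h, g, Fin.sum_univ_eight]
  push_cast
  ring

lemma iota_eq (b : Fin 8 → Bool) (j : Fin 8) : iota b j = 1 ↔ b j = true := by
  cases hb : b j <;> simp [iota, hb]

set_option maxRecDepth 200000 in
lemma key : ∀ b : Fin 8 → Bool, Pb b ↔ Qb b := by decide

/-- A `0/1` vector `v` satisfies that `R_cubeᵀ v` is a `0/1` vector iff `v` is zero, all-ones,
or the characteristic vector of an affine plane of `AG(3,2)` (a 4-set of points summing to zero);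
moreover there are exactly 16 such `0/1` vectors. -/
theorem stmt_14 :
    (∀ v : Fin 8 → ℝ, (∀ j, v j = 0 ∨ v j = 1) →
      ((∀ j, Rcube.transpose.mulVec v j = 0 ∨ Rcube.transpose.mulVec v j = 1) ↔
        (v = (fun _ => 0) ∨ v = (fun _ => 1) ∨
          ((Finset.univ.filter fun j => v j = 1).card = 4 ∧
            ∀ a : Fin 3, ∑ j ∈ Finset.univ.filter (fun j => v j = 1), cubePt j a = 0)))) ∧
    Set.ncard {v : Fin 8 → ℝ | (∀ j, v j = 0 ∨ v j = 1) ∧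
      (∀ j, Rcube.transpose.mulVec v j = 0 ∨ Rcube.transpose.mulVec v j = 1)} = 16 := by
  -- general reduction lemmas
  have hv_iota : ∀ v : Fin 8 → ℝ, (∀ j, v j = 0 ∨ v j = 1) →
      v = iota (fun j => decide (v j = 1)) := by
    intro v hv
    funext j
    rcases hv j with h | h <;> simp [iota, h]
  have hPb : ∀ b : Fin 8 → Bool,
      ((∀ j, Rcube.transpose.mulVec (iota b) j = 0 ∨
        Rcube.transpose.mulVec (iota b) j = 1) ↔ Pb b) := by
    intro b
    constructor
    · intro h j
      rcases h j with h' | h' <;> rw [mulVec_iota] at h'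
      · left
        have : (g b j : ℝ) = 0 := by linarith
        exact_mod_cast this
      · right
        have : (g b j : ℝ) = 2 := by linarith
        exact_mod_cast this
    · intro h j
      rcases h j with h' | h' <;> rw [mulVec_iota, h'] <;> norm_num
  have hQb : ∀ b : Fin 8 → Bool,
      ((iota b = (fun _ => 0) ∨ iota b = (fun _ => 1) ∨
          ((Finset.univ.filter fun j => iota b j = 1).card = 4 ∧
            ∀ a : Fin 3, ∑ j ∈ Finset.univ.filter (fun j => iota b j = 1), cubePt j a = 0))
        ↔ Qb b) := by
    intro b
    have hf : (Finset.univ.filter fun j => iota b j = 1)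
        = (Finset.univ.filter fun j => b j = true) := by
      exact Finset.filter_congr fun j _ => by rw [iota_eq]
    have h0 : iota b = (fun _ => 0) ↔ b = (fun _ => false) := by
      constructor
      · intro h; funext j
        have := congrFun h j
        cases hb : b j
        · rfl
        · simp [iota, hb] at this
      · intro h; funext j; simp [iota, h]
    have h1 : iota b = (fun _ => 1) ↔ b = (fun _ => true) := by
      constructor
      · intro h; funext j
        have := congrFun h j
        cases hb : b j
        · simp [iota, hb] at this
        · rfl
      · intro h; funext j; simp [iota, h]
    rw [hf, h0, h1]
    rfl
  constructor
  · intro v hv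
    rw [hv_iota v hv]
    rw [hPb, hQb]
    exact key _
  · have hset : {v : Fin 8 → ℝ | (∀ j, v j = 0 ∨ v j = 1) ∧
        (∀ j, Rcube.transpose.mulVec v j = 0 ∨ Rcube.transpose.mulVec v j = 1)}
        = iota '' {b | Pb b} := by
      ext v
      constructor
      · rintro ⟨hv, h⟩
        exact ⟨fun j => decide (v j = 1), (hPb _).mp (by rwa [← hv_iota v hv]),
          (hv_iota v hv).symm⟩
      · rintro ⟨b, hb, rfl⟩
        refine ⟨fun j => by cases hbj : b j <;> simp [iota, hbj], (hPb b).mpr hb⟩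
    rw [hset]
    have hinj : Function.Injective iota := by
      intro b b' h
      funext j
      have := congrFun h j
      cases hb : b j <;> cases hb' : b' j <;> simp [iota, hb, hb'] at this <;> rfl
    rw [Set.ncard_image_of_injective _ hinj]
    have : {b | Pb b} = ↑(Finset.univ.filter fun b => Pb b) := by
      ext b; simp
    rw [this, Set.ncard_coe_finset]
    decide
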